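/- arXiv:2311.18772 — 3 statements merged into one kernel-verified Lean document; each statement's English description precedes it below -/
import Mathlib

section
/- In the exact (4, 2) nim, a position (a, b, c, d) with a ≤ b ≤ c ≤ d is a P-position if and only if a = b = c (i.e., the three smallest piles are equal). -/
/-!
The positions in which all piles but one sit at a common minimum form a kernel (an independent,
absorbing set) of the move graph. From such a position, of any two reduced piles at least one was
at the minimum, so it drops below the two untouched piles, and the result has two piles above its
minimum. From any other position, two piles exceed the minimum, and lowering both to it lands back
in the set (with four piles only one pile is left free). Moves decrease the total number of stones,
and in a well-founded game the P-positions are exactly the kernel.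
-/

/-- The `j`-th binary digit of `m`. -/
def digit (m j : ℕ) : ℕ := m / 2 ^ j % 2

/-- The `j`-th column sum of the Bouton matrix of a position. -/
def colSum {n : ℕ} (x : Fin n → ℕ) (j : ℕ) : ℕ := ∑ i, digit (x i) j

/-- A move of classical nim: strictly reduce exactly one pile. -/
def NimMove {n : ℕ} (x y : Fin n → ℕ) : Prop :=
  ∃ i, y i < x i ∧ ∀ j, j ≠ i → y j = x j

/-- A move of Moore's nim(n, ≤k): strictly reduce at least one and at most `k` piles. -/
def MooreMove (k : ℕ) {n : ℕ} (x y : Fin n → ℕ) : Prop :=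
  ∃ S : Finset (Fin n), S.Nonempty ∧ S.card ≤ k ∧ (∀ i ∈ S, y i < x i) ∧ ∀ i ∉ S, y i = x i

/-- A move of exact (n, k) nim: strictly reduce exactly `k` piles. -/
def ExactMove (k : ℕ) {n : ℕ} (x y : Fin n → ℕ) : Prop :=
  ∃ S : Finset (Fin n), S.card = k ∧ (∀ i ∈ S, y i < x i) ∧ ∀ i ∉ S, y i = x i

/-- N-positions of an impartial game: there is a move to a position all of whose
moves lead to N-positions (i.e. a move to a P-position). -/
inductive NPos {α : Type*} (Move : α → α → Prop) : α → Prop where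
  | intro {x y : α} (h : Move x y) (hy : ∀ z, Move y z → NPos Move z) : NPos Move x

/-- P-positions of an impartial game: every move leads to an N-position
(in particular, terminal positions are P-positions). -/
def PPos {α : Type*} (Move : α → α → Prop) (x : α) : Prop :=
  ∀ y, Move x y → NPos Move y

/-- With at least two piles, `m` is forced to be the minimum; for four piles this says that the
three smallest piles are equal. -/
def AllButOneMinimal {n : ℕ} (x : Fin n → ℕ) : Prop :=
  ∃ m, (∀ i, m ≤ x i) ∧ {i | m < x i}.Subsingleton

section Kernel

variable {α : Type*} {Move : α → α → Prop}

theorem NPos.not_pPos {x : α} (h : NPos Move x) : ¬ PPos Move x := by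
  induction h with
  | intro hxy _ ih =>
    intro hx
    obtain ⟨hyz, hz⟩ := hx _ hxy
    exact ih _ hyz hz

theorem pPos_and_nPos_of_independent_of_absorbing (hwf : WellFounded (flip Move)) {Q : α → Prop}
    (hindep : ∀ x y, Q x → Move x y → ¬ Q y) (habsorb : ∀ x, ¬ Q x → ∃ y, Move x y ∧ Q y)
    (x : α) : (Q x → PPos Move x) ∧ (¬ Q x → NPos Move x) := by
  induction x using hwf.induction with
  | _ x ih =>
    refine ⟨fun hx y hxy => (ih y hxy).2 (hindep x y hx hxy), fun hx => ?_⟩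
    obtain ⟨y, hxy, hy⟩ := habsorb x hx
    exact NPos.intro hxy ((ih y hxy).1 hy)

theorem pPos_iff_of_independent_of_absorbing (hwf : WellFounded (flip Move)) {Q : α → Prop}
    (hindep : ∀ x y, Q x → Move x y → ¬ Q y) (habsorb : ∀ x, ¬ Q x → ∃ y, Move x y ∧ Q y)
    (x : α) : PPos Move x ↔ Q x := by
  have h := pPos_and_nPos_of_independent_of_absorbing hwf hindep habsorb x
  exact ⟨fun hx => by_contra fun hQ => (h.2 hQ).not_pPos hx, h.1⟩

end Kernel

namespace ExactMove

variable {n k : ℕ}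

theorem sum_lt (hk : 0 < k) {x y : Fin n → ℕ} (h : ExactMove k x y) : ∑ i, y i < ∑ i, x i := by
  obtain ⟨S, hcard, hlt, heq⟩ := h
  obtain ⟨s, hs⟩ := Finset.card_pos.1 (hcard ▸ hk)
  refine Finset.sum_lt_sum (fun i _ => ?_) ⟨s, Finset.mem_univ s, hlt s hs⟩
  by_cases hi : i ∈ S
  · exact (hlt i hi).le
  · exact (heq i hi).le

theorem wellFounded_flip (hk : 0 < k) : WellFounded (flip (ExactMove k : (Fin n → ℕ) → _ → Prop)) :=
  Subrelation.wf (fun h => sum_lt hk h) (measure fun x : Fin n → ℕ => ∑ i, x i).wf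

theorem not_allButOneMinimal (hk : 2 ≤ k) (hkn : k + 2 ≤ n) {x y : Fin n → ℕ}
    (hx : AllButOneMinimal x) (hxy : ExactMove k x y) : ¬ AllButOneMinimal y := by
  obtain ⟨m, hm, hsub⟩ := hx
  obtain ⟨S, hcard, hlt, heq⟩ := hxy
  rintro ⟨m', hm', hsub'⟩
  obtain ⟨s, hs, t, ht, hst⟩ := Finset.one_lt_card.1 (by omega : 1 < S.card)
  have hdrop : ∃ u ∈ S, y u < m := by
    by_cases hms : m < x s
    · exact ⟨t, ht, (hlt t ht).trans_le (not_lt.1 fun hmt => hst (hsub hms hmt))⟩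
    · exact ⟨s, hs, (hlt s hs).trans_le (not_lt.1 hms)⟩
  obtain ⟨u, -, hu⟩ := hdrop
  have habove : ∀ i ∉ S, m' < y i := fun i hi =>
    ((hm' u).trans_lt hu).trans_le ((hm i).trans (heq i hi).ge)
  have hcompl : 1 < Sᶜ.card := by
    rw [Finset.card_compl, Fintype.card_fin]
    omega
  obtain ⟨p, hp, q, hq, hpq⟩ := Finset.one_lt_card.1 hcompl
  exact hpq (hsub' (habove p (Finset.mem_compl.1 hp)) (habove q (Finset.mem_compl.1 hq)))

end ExactMove

theorem Fin.subsingleton_setOf_ne_three {s t u : Fin 4} (hst : s ≠ t) (hsu : s ≠ u) (htu : t ≠ u) :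
    {p | p ≠ s ∧ p ≠ t ∧ p ≠ u}.Subsingleton := by
  intro p hp q hq
  simp only [Set.mem_ofPred, ne_eq, Fin.ext_iff] at *
  omega

theorem exists_exactMove_two_allButOneMinimal {x : Fin 4 → ℕ} (hx : ¬ AllButOneMinimal x) :
    ∃ y, ExactMove 2 x y ∧ AllButOneMinimal y := by
  obtain ⟨i₀, -, hmin⟩ := Finset.exists_min_image Finset.univ x Finset.univ_nonempty
  have hmin' : ∀ i, x i₀ ≤ x i := fun i => hmin i (Finset.mem_univ i)
  obtain ⟨s, hs, t, ht, hst⟩ : {i | x i₀ < x i}.Nontrivial :=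
    Set.not_subsingleton_iff.1 fun h => hx ⟨x i₀, hmin', h⟩
  let y : Fin 4 → ℕ := fun i => if i ∈ ({s, t} : Finset (Fin 4)) then x i₀ else x i
  have hmove : ExactMove 2 x y := by
    refine ⟨{s, t}, Finset.card_pair hst, fun i hi => ?_, fun i hi => if_neg hi⟩
    simp only [y, if_pos hi]
    simp only [Finset.mem_insert, Finset.mem_singleton] at hi
    rcases hi with rfl | rfl
    exacts [hs, ht]
  have habove : ∀ i, x i₀ < y i → i ≠ s ∧ i ≠ t ∧ i ≠ i₀ := by
    intro i hi
    by_cases hS : i ∈ ({s, t} : Finset (Fin 4))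
    · simp only [y, if_pos hS, lt_self_iff_false] at hi
    · simp only [y, if_neg hS] at hi
      simp only [Finset.mem_insert, Finset.mem_singleton, not_or] at hS
      exact ⟨hS.1, hS.2, ne_of_apply_ne x hi.ne'⟩
  refine ⟨y, hmove, x i₀, fun i => ?_, ?_⟩
  · dsimp only [y]
    split
    exacts [le_rfl, hmin' i]
  · exact (Fin.subsingleton_setOf_ne_three hst (ne_of_apply_ne x hs.ne')
      (ne_of_apply_ne x ht.ne')).anti habove

theorem pPos_exactMove_two_iff (x : Fin 4 → ℕ) : PPos (ExactMove 2) x ↔ AllButOneMinimal x :=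
  pPos_iff_of_independent_of_absorbing (ExactMove.wellFounded_flip two_pos)
    (fun _ _ => ExactMove.not_allButOneMinimal le_rfl le_rfl)
    (fun _ => exists_exactMove_two_allButOneMinimal) x

theorem allButOneMinimal_vec_iff {a b c d : ℕ} (hab : a ≤ b) (hbc : b ≤ c) (hcd : c ≤ d) :
    AllButOneMinimal ![a, b, c, d] ↔ a = b ∧ b = c := by
  constructor
  · rintro ⟨m, hm, hsub⟩
    have hma : m ≤ a := hm 0
    have hca : ¬ a < c := fun hac =>
      absurd (@hsub 2 (show m < c by omega) 3 (show m < d by omega)) (by decide)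
    omega
  · rintro ⟨rfl, rfl⟩
    refine ⟨a, fun i => ?_, (Set.subsingleton_singleton (a := 3)).anti fun i (hi : a < _) => ?_⟩ <;>
      fin_cases i <;> simp_all

/-- P-positions of exact (4,2) nim are exactly the sorted positions
whose three smallest piles are equal. -/
theorem exact42_PPos_iff (a b c d : ℕ) (hab : a ≤ b) (hbc : b ≤ c) (hcd : c ≤ d) :
    PPos (ExactMove 2) ![a, b, c, d] ↔ (a = b ∧ b = c) := by
  rw [pPos_exactMove_two_iff, allButOneMinimal_vec_iff hab hbc hcd]
end

section
/- Let x = (x_1,...,x_5) be a position of the exact (5,2) nim with x_1 ≤ ... ≤ x_5, and let x̂ = (x_1,x_2,x_3,x_4) be its reduced position. If every column sum of the Bouton matrix of x̂ is 0 mod 3 (i.e., x̂ is a Moore nim(4,≤2) P-position), then no move in the exact (5,2) nim from x leads to a position y whose reduced position ŷ also has all column sums 0 mod 3, unless the pile of maximum size is changed by the move. -/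
/-!
Removing the largest pile turns an exact (5,2) move that fixes it into a Moore nim(4, ≤2)
move on the four smallest piles. Any Moore nim(n, ≤k) move changes some column sum of the
Bouton matrix by an amount between `1` and `k`, namely at the highest bit in which a reduced
pile changes, so the column sums cannot all stay divisible by `k + 1`.
-/

theorem digit_eq_toNat_testBit (m j : ℕ) : digit m j = (m.testBit j).toNat := by
  rw [digit, Nat.testBit_eq_decide_div_mod_eq]
  rcases Nat.mod_two_eq_zero_or_one (m / 2 ^ j) with h | h <;> simp [h]

theorem Nat.exists_testBit_of_lt {a b : ℕ} (h : b < a) :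
    ∃ j, a.testBit j = true ∧ b.testBit j = false ∧
      ∀ k, j < k → a.testBit k = b.testBit k := by
  obtain ⟨j, hj, hmax⟩ := Nat.exists_most_significant_bit (Nat.xor_ne_zero_iff.mpr h.ne')
  have hhigh : ∀ k, j < k → a.testBit k = b.testBit k := fun k hk => by
    simpa [Nat.testBit_xor] using hmax k hk
  rw [Nat.testBit_xor] at hj
  suffices a.testBit j = true ∧ b.testBit j = false from ⟨j, this.1, this.2, hhigh⟩
  cases ha : a.testBit j <;> cases hb : b.testBit j <;> simp only [ha, hb] at hj ⊢ <;>
    simp at hj ⊢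
  exact h.not_gt (Nat.lt_of_testBit j ha hb hhigh)

theorem exists_digit_of_lt {a b : ℕ} (h : b < a) :
    ∃ j, digit a j = 1 ∧ digit b j = 0 ∧ ∀ k, j < k → digit a k = digit b k := by
  obtain ⟨j, ha, hb, hhigh⟩ := Nat.exists_testBit_of_lt h
  exact ⟨j, by simp [digit_eq_toNat_testBit, ha], by simp [digit_eq_toNat_testBit, hb],
    fun k hk => by simp [digit_eq_toNat_testBit, hhigh k hk]⟩

namespace MooreMove

variable {k n : ℕ} {x y : Fin n → ℕ}

theorem exists_colSum_lt (h : MooreMove k x y) :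
    ∃ j, colSum y j < colSum x j ∧ colSum x j ≤ colSum y j + k := by
  obtain ⟨S, hne, hcard, hlt, hout⟩ := h
  choose! t ht using fun i (hi : i ∈ S) => exists_digit_of_lt (hlt i hi)
  set J := S.sup' hne t
  set T := S.filter (t · = J)
  have hdigit : ∀ i, digit (x i) J = digit (y i) J + if i ∈ T then 1 else 0 := by
    intro i
    by_cases hi : i ∈ S
    · obtain htJ | htJ := (show t i ≤ J from S.le_sup' t hi).lt_or_eq
      · simp [T, hi, htJ.ne, (ht i hi).2.2 J htJ]
      · have hiT : i ∈ T := Finset.mem_filter.mpr ⟨hi, htJ⟩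
        rw [if_pos hiT, ← htJ, (ht i hi).1, (ht i hi).2.1]
    · simp [T, hi, hout i hi]
  have hsum : colSum x J = colSum y J + T.card := by
    simp only [colSum, hdigit, Finset.sum_add_distrib, Finset.sum_boole,
      Finset.filter_mem_eq_inter, Finset.univ_inter, Nat.cast_id]
  obtain ⟨i, hiS, hiJ⟩ := Finset.exists_mem_eq_sup' hne t
  have hT_pos : 0 < T.card := Finset.card_pos.mpr ⟨i, Finset.mem_filter.mpr ⟨hiS, hiJ.symm⟩⟩
  have hT_le : T.card ≤ k := (Finset.card_filter_le S _).trans hcard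
  exact ⟨J, by omega, by omega⟩

theorem exists_colSum_mod_ne (h : MooreMove k x y) :
    ∃ j, colSum y j % (k + 1) ≠ colSum x j % (k + 1) := by
  obtain ⟨j, hlt, hle⟩ := h.exists_colSum_lt
  refine ⟨j, fun hmod => ?_⟩
  have hdvd : k + 1 ∣ colSum x j - colSum y j :=
    Nat.dvd_of_mod_eq_zero (Nat.sub_mod_eq_zero_of_mod_eq hmod.symm)
  have := Nat.eq_zero_of_dvd_of_lt hdvd (by omega)
  omega

theorem init {x y : Fin (n + 1) → ℕ} (h : MooreMove k x y)
    (hlast : y (Fin.last n) = x (Fin.last n)) :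
    MooreMove k (fun i : Fin n => x i.castSucc) (fun i => y i.castSucc) := by
  obtain ⟨S, hne, hcard, hlt, hout⟩ := h
  obtain ⟨i, hi⟩ := hne
  obtain ⟨i', rfl⟩ := (Fin.exists_castSucc_eq (i := i)).mpr fun hi_last =>
    (hlt i hi).ne (by subst hi_last; exact hlast)
  refine ⟨S.preimage Fin.castSucc (Fin.castSucc_injective n).injOn, ⟨i', by simpa using hi⟩,
    ?_, fun j hj => hlt _ (by simpa using hj), fun j hj => hout _ (by simpa using hj)⟩
  exact (Finset.card_le_card_of_injOn Fin.castSucc (fun j hj => by simpa using hj)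
    (Fin.castSucc_injective n).injOn).trans hcard

end MooreMove

theorem ExactMove.mooreMove {k n : ℕ} {x y : Fin n → ℕ} (hk : 0 < k) (h : ExactMove k x y) :
    MooreMove k x y := by
  obtain ⟨S, hcard, hlt, hout⟩ := h
  exact ⟨S, Finset.card_pos.mp (hcard ▸ hk), hcard.le, hlt, hout⟩

theorem exact52_move_changes_leader_general (x y : Fin 5 → ℕ)
    (hbx : ∀ j, colSum (fun i : Fin 4 => x i.castSucc) j % 3 = 0)
    (hmv : ExactMove 2 x y)
    (hby : ∀ j, colSum (fun i : Fin 4 => y i.castSucc) j % 3 = 0) :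
    y 4 ≠ x 4 := by
  intro hlast
  obtain ⟨j, hj⟩ := ((hmv.mooreMove two_pos).init hlast).exists_colSum_mod_ne
  exact hj (by rw [hby j, hbx j])

/-- if a sorted exact (5,2) nim position has balanced reduced matrix,
then any move whose result also has balanced four smallest old coordinates must
change the maximum pile. -/
theorem exact52_move_changes_leader (x y : Fin 5 → ℕ) (hx : Monotone x)
    (hbx : ∀ j, colSum (fun i : Fin 4 => x i.castSucc) j % 3 = 0)
    (hmv : ExactMove 2 x y)
    (hby : ∀ j, colSum (fun i : Fin 4 => y i.castSucc) j % 3 = 0) :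
    y 4 ≠ x 4 :=
  exact52_move_changes_leader_general x y hbx hmv hby
end

section
/- Let a, b, c, d be nonnegative integers such that for every bit index j, the number of elements of {a,b,c,d} (with multiplicity) having j-th binary digit 1 is 0 or 3 (balanced). Suppose a move of Moore's nim(4, ≤2) is applied: exactly one or two of the four values are strictly decreased, yielding (a',b',c',d'). Then (a',b',c',d') is not balanced. -/
/-!
A move touches at most two piles, so it changes every column sum by at most two; as the
balanced column sums `0` and `3` differ by three, a balanced-to-balanced move would keep every
column sum. But the column sums determine the total `∑ i, x i = ∑ j, colSum x j * 2 ^ j`, which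
every move strictly decreases.
-/

open Finset

lemma digit_le_one (m j : ℕ) : digit m j ≤ 1 :=
  Nat.le_of_lt_succ (Nat.mod_lt _ two_pos)

lemma mod_two_pow_eq_sum_digit (m N : ℕ) :
    m % 2 ^ N = ∑ j ∈ range N, digit m j * 2 ^ j := by
  induction N with
  | zero => simp [Nat.mod_one]
  | succ N ih =>
    rw [sum_range_succ, ← ih, pow_succ, Nat.mod_mul, digit]
    ring

lemma sum_eq_sum_colSum_mul_two_pow {n : ℕ} (x : Fin n → ℕ) {N : ℕ} (hN : ∀ i, x i < 2 ^ N) :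
    ∑ i, x i = ∑ j ∈ range N, colSum x j * 2 ^ j := by
  simp_rw [colSum, sum_mul]
  rw [sum_comm]
  refine sum_congr rfl fun i _ => ?_
  rw [← mod_two_pow_eq_sum_digit, Nat.mod_eq_of_lt (hN i)]

lemma sum_eq_of_colSum_eq {n : ℕ} {x y : Fin n → ℕ} (h : ∀ j, colSum x j = colSum y j) :
    ∑ i, x i = ∑ i, y i := by
  set N := ∑ i, x i + ∑ i, y i
  have hx : ∀ i, x i < 2 ^ N := fun i =>
    ((single_le_sum (fun i _ => Nat.zero_le (x i)) (mem_univ i)).trans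
      (Nat.le_add_right _ _)).trans_lt N.lt_two_pow_self
  have hy : ∀ i, y i < 2 ^ N := fun i =>
    ((single_le_sum (fun i _ => Nat.zero_le (y i)) (mem_univ i)).trans
      (Nat.le_add_left _ _)).trans_lt N.lt_two_pow_self
  rw [sum_eq_sum_colSum_mul_two_pow x hx, sum_eq_sum_colSum_mul_two_pow y hy]
  simp_rw [h]

lemma colSum_le_colSum_add_card {n : ℕ} {x y : Fin n → ℕ} (S : Finset (Fin n))
    (h : ∀ i ∉ S, x i = y i) (j : ℕ) : colSum x j ≤ colSum y j + #S := by
  have hS : ∑ i ∈ S, digit (x i) j ≤ #S := by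
    simpa using sum_le_card_nsmul S _ 1 fun i _ => digit_le_one (x i) j
  have hSc : ∑ i ∈ Sᶜ, digit (x i) j = ∑ i ∈ Sᶜ, digit (y i) j :=
    sum_congr rfl fun i hi => by rw [h i (mem_compl.mp hi)]
  rw [colSum, colSum, ← sum_add_sum_compl S, ← sum_add_sum_compl S, hSc]
  omega

lemma MooreMove.sum_lt {k n : ℕ} {x y : Fin n → ℕ} (h : MooreMove k x y) :
    ∑ i, y i < ∑ i, x i := by
  obtain ⟨S, ⟨i₀, hi₀⟩, -, hlt, heq⟩ := h
  refine sum_lt_sum (fun i _ => ?_) ⟨i₀, mem_univ _, hlt i₀ hi₀⟩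
  by_cases hi : i ∈ S
  · exact (hlt i hi).le
  · exact (heq i hi).le

/-- a Moore's nim(4, ≤2) move applied to a balanced 4-tuple
yields an unbalanced 4-tuple. -/
theorem balanced_not_preserved (x x' : Fin 4 → ℕ)
    (hx : ∀ j, colSum x j = 0 ∨ colSum x j = 3) (h : MooreMove 2 x x') :
    ¬ ∀ j, colSum x' j = 0 ∨ colSum x' j = 3 := by
  intro hx'
  have hcol : ∀ j, colSum x' j = colSum x j := by
    obtain ⟨S, -, hcard, -, heq⟩ := h
    intro j
    have h₁ := colSum_le_colSum_add_card S heq j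
    have h₂ := colSum_le_colSum_add_card S (fun i hi => (heq i hi).symm) j
    rcases hx j with _ | _ <;> rcases hx' j with _ | _ <;> omega
  exact (sum_eq_of_colSum_eq hcol).not_lt h.sum_lt
end
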